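/- arXiv:2106.12142 — 4 statements merged into one kernel-verified Lean document; each statement's English description precedes it below -/
import Mathlib

section
/- With S, A finite, γ ∈ (0,1), and π a fixed stochastic policy, define the inverse soft Bellman operator T^π : ℝ^{S×A} → ℝ^{S×A} by (T^π Q)(s,a) = Q(s,a) − γ · E_{s' ∼ P(s,a)}[V^π(s')], where V^π(s) = Σ_a π(a|s)·(Q(s,a) − log π(a|s)). Then T^π is a bijection, and for any r : S × A → ℝ, (T^π)^{-1}(r) is the unique fixed point of the soft Bellman operator B^π Q = r + γ·E_{s'}[V^π(s')]. -/
/-!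
Rewrite `T Q = r` as `Q = B r Q`. Since the weights `π s ·` and `P s a ·` are probability vectors,
`Q ↦ V Q` is nonexpansive for the sup norm, so `B r` is a `γ`-contraction of the complete space
`S × A → ℝ`. By Banach's fixed point theorem `B r` has exactly one fixed point, which is exactly
the statement that `r` has exactly one preimage under `T`.
-/

open Finset

lemma dist_sum_mul_sum_mul_le {ι : Type*} [Fintype ι] {w : ι → ℝ} (hw0 : ∀ i, 0 ≤ w i)
    (hw1 : ∑ i, w i = 1) (f g : ι → ℝ) :
    dist (∑ i, w i * f i) (∑ i, w i * g i) ≤ dist f g :=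
  calc dist (∑ i, w i * f i) (∑ i, w i * g i)
      = |∑ i, w i * (f i - g i)| := by simp only [Real.dist_eq, mul_sub, sum_sub_distrib]
    _ ≤ ∑ i, w i * dist f g := by
        refine (abs_sum_le_sum_abs _ _).trans (sum_le_sum fun i _ => ?_)
        rw [abs_mul, abs_of_nonneg (hw0 i), ← Real.dist_eq]
        exact mul_le_mul_of_nonneg_left (dist_le_pi_dist f g i) (hw0 i)
    _ = dist f g := by rw [← sum_mul, hw1, one_mul]

lemma lipschitzWith_one_softValue {S A : Type*} [Fintype S] [Fintype A]
    {π : S → A → ℝ} (hπ0 : ∀ s a, 0 ≤ π s a) (hπsum : ∀ s, ∑ a, π s a = 1)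
    {V : (S × A → ℝ) → S → ℝ}
    (hV : ∀ Q s, V Q s = ∑ a, π s a * (Q (s, a) - Real.log (π s a))) :
    LipschitzWith 1 V := by
  refine LipschitzWith.of_dist_le_mul fun Q Q' => ?_
  rw [NNReal.coe_one, one_mul, dist_pi_le_iff dist_nonneg]
  intro s
  simp only [hV]
  refine (dist_sum_mul_sum_mul_le (hπ0 s) (hπsum s) _ _).trans ?_
  refine (dist_pi_le_iff dist_nonneg).2 fun a => ?_
  rw [dist_sub_right]
  exact dist_le_pi_dist Q Q' (s, a)

lemma contractingWith_bellman {S A : Type*} [Fintype S] [Fintype A]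
    {γ : ℝ} (hγ0 : 0 ≤ γ) (hγ1 : γ < 1)
    {P : S → A → S → ℝ} (hPnn : ∀ s a s', 0 ≤ P s a s') (hPsum : ∀ s a, ∑ s', P s a s' = 1)
    {V : (S × A → ℝ) → S → ℝ} (hVlip : LipschitzWith 1 V)
    {B : (S × A → ℝ) → (S × A → ℝ) → (S × A → ℝ)}
    (hB : ∀ r Q sa, B r Q sa = r sa + γ * ∑ s', P sa.1 sa.2 s' * V Q s') (r : S × A → ℝ) :
    ContractingWith ⟨γ, hγ0⟩ (B r) := by
  refine ⟨hγ1, LipschitzWith.of_dist_le_mul fun Q Q' => ?_⟩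
  refine (dist_pi_le_iff (by positivity)).2 fun sa => ?_
  rw [hB, hB, dist_add_left, Real.dist_eq, ← mul_sub, abs_mul, abs_of_nonneg hγ0, ← Real.dist_eq]
  refine mul_le_mul_of_nonneg_left (?_ : _ ≤ dist Q Q') hγ0
  calc dist (∑ s', P sa.1 sa.2 s' * V Q s') (∑ s', P sa.1 sa.2 s' * V Q' s')
      ≤ dist (V Q) (V Q') := dist_sum_mul_sum_mul_le (hPnn _ _) (hPsum _ _) _ _
    _ ≤ dist Q Q' := by simpa using hVlip.dist_le_mul Q Q'

theorem inverse_soft_bellman_bijective_general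
    {S A : Type*} [Fintype S] [Fintype A]
    (γ : ℝ) (hγ0 : 0 < γ) (hγ1 : γ < 1)
    (P : S → A → S → ℝ) (hPnn : ∀ s a s', 0 ≤ P s a s')
    (hPsum : ∀ s a, ∑ s', P s a s' = 1)
    (π : S → A → ℝ) (hπpos : ∀ s a, 0 < π s a)
    (hπsum : ∀ s, ∑ a, π s a = 1)
    (V : (S × A → ℝ) → S → ℝ)
    (hV : ∀ Q s, V Q s = ∑ a, π s a * (Q (s, a) - Real.log (π s a)))
    (T : (S × A → ℝ) → (S × A → ℝ))
    (hT : ∀ Q sa, T Q sa = Q sa - γ * ∑ s', P sa.1 sa.2 s' * V Q s')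
    (B : (S × A → ℝ) → (S × A → ℝ) → (S × A → ℝ))
    (hBdef : ∀ r Q sa, B r Q sa = r sa + γ * ∑ s', P sa.1 sa.2 s' * V Q s') :
    Function.Bijective T ∧
      ∀ r Q : S × A → ℝ, T Q = r ↔ B r Q = Q := by
  have hTB (r Q : S × A → ℝ) : T Q = r ↔ B r Q = Q := by
    simp only [funext_iff, hT, hBdef]
    exact forall_congr' fun sa => by constructor <;> intro h <;> linarith
  have hB := contractingWith_bellman hγ0.le hγ1 hPnn hPsum
    (lipschitzWith_one_softValue (fun s a => (hπpos s a).le) hπsum hV) hBdef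
  refine ⟨⟨fun Q Q' hQ => ?_, fun r => ?_⟩, hTB⟩
  · exact (hB (T Q')).fixedPoint_unique' ((hTB _ _).1 hQ) ((hTB _ _).1 rfl)
  · exact ⟨ContractingWith.fixedPoint _ (hB r), (hTB _ _).2 (hB r).fixedPoint_isFixedPt⟩

/-- The inverse soft Bellman operator T^π is a bijection, and for any reward r,
(T^π)⁻¹ r is the unique fixed point of the soft Bellman operator B^π for r:
a function Q satisfies T^π Q = r iff it is a fixed point of B^π with reward r. -/
theorem inverse_soft_bellman_bijective
    {S A : Type*} [Fintype S] [Fintype A] [Nonempty S] [Nonempty A]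
    (γ : ℝ) (hγ0 : 0 < γ) (hγ1 : γ < 1)
    (P : S → A → S → ℝ) (hPnn : ∀ s a s', 0 ≤ P s a s')
    (hPsum : ∀ s a, ∑ s', P s a s' = 1)
    (π : S → A → ℝ) (hπpos : ∀ s a, 0 < π s a)
    (hπsum : ∀ s, ∑ a, π s a = 1)
    (V : (S × A → ℝ) → S → ℝ)
    (hV : ∀ Q s, V Q s = ∑ a, π s a * (Q (s, a) - Real.log (π s a)))
    (T : (S × A → ℝ) → (S × A → ℝ))
    (hT : ∀ Q sa, T Q sa = Q sa - γ * ∑ s', P sa.1 sa.2 s' * V Q s')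
    (B : (S × A → ℝ) → (S × A → ℝ) → (S × A → ℝ))
    (hBdef : ∀ r Q sa, B r Q sa = r sa + γ * ∑ s', P sa.1 sa.2 s' * V Q s') :
    Function.Bijective T ∧
      ∀ r Q : S × A → ℝ, T Q = r ↔ B r Q = Q :=
  inverse_soft_bellman_bijective_general γ hγ0 hγ1 P hPnn hPsum π hπpos hπsum V hV T hT B hBdef
end

section
/- Let J*(Q) = E_{ρ_E}[φ(Q(s,a) − γ·E_{s'∼P(s,a)}[V*(s')])] − (1−γ)·E_{s_0∼p_0}[V*(s_0)], where V*(s) = log Σ_a exp Q(s,a) and φ is concave and non-decreasing. Then J* is concave in Q ∈ ℝ^{S×A}. -/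
/-! Log-sum-exp is convex, so each `V Q s` is a convex function of `Q`. Hence the soft Bellman
residual `Q sa - γ 𝔼[V Q s']` is concave, stays concave under the concave non-decreasing `φ`, and
subtracting the convex `(1 - γ) 𝔼[V Q s₀]` keeps `J*` concave. -/

open Finset Real Set

section FinsetSum

variable {𝕜 E β ι : Type*} [Semiring 𝕜] [PartialOrder 𝕜] [AddCommMonoid E] [SMul 𝕜 E]
  [AddCommMonoid β] [PartialOrder β] [IsOrderedAddMonoid β] [Module 𝕜 β]
  {s : Set E} {t : Finset ι} {f : ι → E → β}

theorem ConvexOn.finsetSum (hs : Convex 𝕜 s) (hf : ∀ i ∈ t, ConvexOn 𝕜 s (f i)) :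
    ConvexOn 𝕜 s (fun x => ∑ i ∈ t, f i x) := by
  classical
  induction t using Finset.induction with
  | empty => simpa using convexOn_const 0 hs
  | insert i t hi ih =>
    simp only [sum_insert hi]
    exact (hf i (mem_insert_self i t)).add (ih fun j hj => hf j (mem_insert_of_mem hj))

theorem ConcaveOn.finsetSum (hs : Convex 𝕜 s) (hf : ∀ i ∈ t, ConcaveOn 𝕜 s (f i)) :
    ConcaveOn 𝕜 s (fun x => ∑ i ∈ t, f i x) :=
  ConvexOn.finsetSum (β := βᵒᵈ) hs hf

end FinsetSum

theorem ConcaveOn.comp_of_monotone {𝕜 E β α : Type*} [Semiring 𝕜] [PartialOrder 𝕜]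
    [AddCommMonoid E] [SMul 𝕜 E] [AddCommMonoid β] [PartialOrder β] [SMul 𝕜 β]
    [AddCommMonoid α] [PartialOrder α] [SMul 𝕜 α] {s : Set E} {f : E → β} {g : β → α}
    (hg : ConcaveOn 𝕜 univ g) (hg_mono : Monotone g) (hf : ConcaveOn 𝕜 s f) :
    ConcaveOn 𝕜 s (g ∘ f) :=
  ⟨hf.1, fun _ hx _ hy _ _ ha hb hab =>
    (hg.2 (mem_univ _) (mem_univ _) ha hb hab).trans (hg_mono (hf.2 hx hy ha hb hab))⟩

theorem convexOn_log_sum_exp {ι : Type*} [Fintype ι] :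
    ConvexOn ℝ univ (fun x : ι → ℝ => log (∑ i, exp (x i))) := by
  refine ⟨convex_univ, fun x _ y _ a b ha hb hab => ?_⟩
  rcases isEmpty_or_nonempty ι with hι | hι
  · simp
  set X := ∑ i, exp (x i)
  set Y := ∑ i, exp (y i)
  have hX : 0 < X := sum_pos (fun i _ => exp_pos _) univ_nonempty
  have hY : 0 < Y := sum_pos (fun i _ => exp_pos _) univ_nonempty
  set L := a * log X + b * log Y
  -- apply convexity of `exp` to the exponents normalised by `log X` and `log Y`
  have hsum : ∑ i, exp ((a • x + b • y) i) ≤ exp L := calc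
    ∑ i, exp ((a • x + b • y) i)
        = exp L * ∑ i, exp (a • (x i - log X) + b • (y i - log Y)) := by
          rw [mul_sum]
          refine sum_congr rfl fun i _ => ?_
          rw [← exp_add]
          simp only [Pi.add_apply, Pi.smul_apply, smul_eq_mul, L]
          ring_nf
    _ ≤ exp L * ∑ i, (a • exp (x i - log X) + b • exp (y i - log Y)) := by
          gcongr with i
          exact convexOn_exp.2 (mem_univ _) (mem_univ _) ha hb hab
    _ = exp L := by
          simp only [smul_eq_mul, exp_sub, exp_log hX, exp_log hY, sum_add_distrib, ← mul_sum,
            ← sum_div]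
          rw [div_self hX.ne', div_self hY.ne', mul_one, mul_one, hab, mul_one]
  calc log (∑ i, exp ((a • x + b • y) i))
      ≤ log (exp L) := log_le_log (sum_pos (fun i _ => exp_pos _) univ_nonempty) hsum
    _ = a • log X + b • log Y := log_exp L

theorem Jstar_concave_general
    {S A : Type*} [Fintype S] [Fintype A]
    (γ : ℝ) (hγ0 : 0 < γ) (hγ1 : γ < 1)
    (p0 : S → ℝ) (hp0nn : ∀ s, 0 ≤ p0 s)
    (P : S → A → S → ℝ) (hPnn : ∀ s a s', 0 ≤ P s a s')
    (ρE : S × A → ℝ) (hρEnn : ∀ sa, 0 ≤ ρE sa)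
    (φ : ℝ → ℝ) (hφconc : ConcaveOn ℝ Set.univ φ) (hφmono : Monotone φ)
    (V : (S × A → ℝ) → S → ℝ)
    (hV : ∀ Q s, V Q s = Real.log (∑ a, Real.exp (Q (s, a)))) :
    ConcaveOn ℝ Set.univ (fun Q : S × A → ℝ =>
      (∑ sa, ρE sa * φ (Q sa - γ * ∑ s', P sa.1 sa.2 s' * V Q s')) -
        (1 - γ) * ∑ s, p0 s * V Q s) := by
  have hV_convex (s : S) : ConvexOn ℝ univ (fun Q => V Q s) := by
    simp only [hV]
    exact convexOn_log_sum_exp.comp_linearMap (LinearMap.funLeft ℝ ℝ (fun a => (s, a)))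
  have hresidual (sa : S × A) :
      ConcaveOn ℝ univ (fun Q => Q sa - γ * ∑ s', P sa.1 sa.2 s' * V Q s') :=
    ((LinearMap.proj sa).concaveOn convex_univ).sub
      ((ConvexOn.finsetSum convex_univ fun s' _ => (hV_convex s').smul (hPnn _ _ s')).smul hγ0.le)
  exact (ConcaveOn.finsetSum convex_univ fun sa _ =>
      (hφconc.comp_of_monotone hφmono (hresidual sa)).smul (hρEnn sa)).sub
    ((ConvexOn.finsetSum convex_univ fun s _ => (hV_convex s).smul (hp0nn s)).smul
      (sub_nonneg.2 hγ1.le))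

/-- Proposition 3.5: with V*(s) = log Σ_a exp Q(s,a) and φ concave non-decreasing,
J*(Q) = E_{ρ_E}[φ(Q(s,a) - γ E_{s'}[V*(s')])] - (1-γ) E_{s₀∼p₀}[V*(s₀)]
is concave in Q. -/
theorem Jstar_concave
    {S A : Type*} [Fintype S] [Fintype A] [Nonempty S] [Nonempty A]
    (γ : ℝ) (hγ0 : 0 < γ) (hγ1 : γ < 1)
    (p0 : S → ℝ) (hp0nn : ∀ s, 0 ≤ p0 s) (hp0sum : ∑ s, p0 s = 1)
    (P : S → A → S → ℝ) (hPnn : ∀ s a s', 0 ≤ P s a s')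
    (hPsum : ∀ s a, ∑ s', P s a s' = 1)
    (ρE : S × A → ℝ) (hρEnn : ∀ sa, 0 ≤ ρE sa) (hρEsum : ∑ sa, ρE sa = 1)
    (φ : ℝ → ℝ) (hφconc : ConcaveOn ℝ Set.univ φ) (hφmono : Monotone φ)
    (V : (S × A → ℝ) → S → ℝ)
    (hV : ∀ Q s, V Q s = Real.log (∑ a, Real.exp (Q (s, a)))) :
    ConcaveOn ℝ Set.univ (fun Q : S × A → ℝ =>
      (∑ sa, ρE sa * φ (Q sa - γ * ∑ s', P sa.1 sa.2 s' * V Q s')) -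
        (1 - γ) * ∑ s, p0 s * V Q s) :=
  Jstar_concave_general γ hγ0 hγ1 p0 hp0nn P hPnn ρE hρEnn φ hφconc hφmono V hV
end

section
/- In a finite MDP, for a fixed Q : S × A → ℝ, the policy minimizing π ↦ J(π, Q) := E_{ρ_E}[T^π Q] − E_{ρ_π}[T^π Q] − H(π) − ψ(T^π Q) over the inner max-entropy RL problem with reward r = T^π Q is given in closed form by π_Q(a|s) = exp(Q(s,a)) / Σ_{a'} exp(Q(s,a')), which is the unique optimal max-entropy policy for reward r = T^{π_Q} Q. -/
/-!
Write `V^π s = ∑ₐ π(a|s) (Q(s,a) - log π(a|s))` for the soft value. Unrolling the discounted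
visitation of `π` telescopes `E_{ρ_π}[T^π Q] + H(π)` into the initial soft value `E_{p0}[V^π]`,
so that `J(π) = E_{ρ_E}[φ(T^π Q)] - E_{p0}[V^π]`. Jensen's inequality for `log` at the points
`exp Q(s,·) / π(·|s)` (Gibbs' variational principle) gives `V^π ≤ log ∑ₐ exp Q(s,a) = V^{π_Q}`
pointwise, with equality only at the softmax. Hence `T^{π_Q} Q ≤ T^π Q`, and since `φ` is
monotone both terms of `J` are smallest at `π_Q`; as `p0 > 0`, equality forces `V^π = V^{π_Q}`.
-/

open Finset

section Gibbs

open Real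

variable {ι : Type*} [Fintype ι]

noncomputable def softmax (f : ι → ℝ) (i : ι) : ℝ := exp (f i) / ∑ j, exp (f j)

theorem sum_exp_pos [Nonempty ι] (f : ι → ℝ) : 0 < ∑ i, exp (f i) :=
  sum_pos (fun i _ => exp_pos (f i)) univ_nonempty

theorem softmax_pos [Nonempty ι] (f : ι → ℝ) (i : ι) : 0 < softmax f i :=
  div_pos (exp_pos _) (sum_exp_pos f)

theorem sum_softmax [Nonempty ι] (f : ι → ℝ) : ∑ i, softmax f i = 1 := by
  simp only [softmax, ← sum_div, div_self (sum_exp_pos f).ne']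

theorem log_softmax [Nonempty ι] (f : ι → ℝ) (i : ι) :
    log (softmax f i) = f i - log (∑ j, exp (f j)) := by
  rw [softmax, log_div (exp_ne_zero _) (sum_exp_pos f).ne', log_exp]

theorem sum_softmax_mul_sub_log_softmax [Nonempty ι] (f : ι → ℝ) :
    ∑ i, softmax f i * (f i - log (softmax f i)) = log (∑ i, exp (f i)) := by
  simp only [log_softmax, sub_sub_cancel, ← sum_mul, sum_softmax, one_mul]

theorem mul_sub_log_eq_smul_log_exp_div {p : ℝ} (hp : 0 < p) (x : ℝ) :
    p * (x - log p) = p • log (exp x / p) := by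
  rw [smul_eq_mul, log_div (exp_ne_zero x) hp.ne', log_exp]

theorem sum_smul_exp_div {f p : ι → ℝ} (hp : ∀ i, 0 < p i) :
    ∑ i, p i • (exp (f i) / p i) = ∑ i, exp (f i) :=
  sum_congr rfl fun i _ => by rw [smul_eq_mul, mul_div_cancel₀ _ (hp i).ne']

theorem sum_mul_sub_log_le_log_sum_exp (f : ι → ℝ) {p : ι → ℝ} (hp : ∀ i, 0 < p i)
    (hsum : ∑ i, p i = 1) :
    ∑ i, p i * (f i - log (p i)) ≤ log (∑ i, exp (f i)) := by
  simp only [mul_sub_log_eq_smul_log_exp_div (hp _), ← sum_smul_exp_div (f := f) hp]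
  exact strictConcaveOn_log_Ioi.concaveOn.le_map_sum (fun i _ => (hp i).le) hsum
    fun i _ => div_pos (exp_pos _) (hp i)

theorem eq_softmax_of_sum_mul_sub_log_eq (f : ι → ℝ) {p : ι → ℝ} (hp : ∀ i, 0 < p i)
    (hsum : ∑ i, p i = 1) (heq : ∑ i, p i * (f i - log (p i)) = log (∑ i, exp (f i))) :
    p = softmax f := by
  simp only [mul_sub_log_eq_smul_log_exp_div (hp _), ← sum_smul_exp_div (f := f) hp] at heq
  have hconst := strictConcaveOn_log_Ioi.eq_of_map_sum_eq (fun i _ => hp i) hsum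
    (fun i _ => div_pos (exp_pos _) (hp i)) heq.ge
  funext i
  have hZ : ∑ j, exp (f j) = exp (f i) / p i := by
    rw [← sum_smul_exp_div hp]
    simp only [hconst (mem_univ _) (mem_univ i)]
    rw [← sum_smul, hsum, one_smul]
  rw [softmax, hZ, div_div_cancel₀ (exp_ne_zero _)]

end Gibbs

section Occupancy

variable {S A : Type*} [Fintype S] [Fintype A] {γ : ℝ} {p0 : S → ℝ} {P : S → A → S → ℝ}
  {π : S → A → ℝ} {d : ℕ → S → ℝ}

theorem sum_transition_mul (w : S → A → ℝ) (W : S → ℝ) :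
    ∑ s', (∑ s, ∑ a, w s a * P s a s') * W s' =
      ∑ s, ∑ a, w s a * ∑ s', P s a s' * W s' := by
  simp only [sum_mul, mul_sum, mul_assoc]
  rw [sum_comm]
  exact sum_congr rfl fun s _ => sum_comm

theorem stateDist_nonneg (hp0 : ∀ s, 0 ≤ p0 s) (hP : ∀ s a s', 0 ≤ P s a s')
    (hπ : ∀ s a, 0 ≤ π s a) (hd0 : d 0 = p0)
    (hdsucc : ∀ t s', d (t + 1) s' = ∑ s, ∑ a, d t s * π s a * P s a s') (t : ℕ) (s : S) :
    0 ≤ d t s := by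
  induction t generalizing s with
  | zero => rw [hd0]; exact hp0 s
  | succ t ih =>
    rw [hdsucc]
    exact sum_nonneg fun s _ => sum_nonneg fun a _ =>
      mul_nonneg (mul_nonneg (ih s) (hπ s a)) (hP s a _)

theorem sum_stateDist (hp0sum : ∑ s, p0 s = 1) (hPsum : ∀ s a, ∑ s', P s a s' = 1)
    (hπsum : ∀ s, ∑ a, π s a = 1) (hd0 : d 0 = p0)
    (hdsucc : ∀ t s', d (t + 1) s' = ∑ s, ∑ a, d t s * π s a * P s a s') (t : ℕ) :
    ∑ s, d t s = 1 := by
  induction t with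
  | zero => rw [hd0, hp0sum]
  | succ t ih =>
    have hmass := sum_transition_mul (P := P) (fun s a => d t s * π s a) 1
    simp only [Pi.one_apply, mul_one, hPsum] at hmass
    simp only [hdsucc, hmass, ← mul_sum, hπsum, mul_one, ih]

theorem summable_discounted_stateDist (hγ0 : 0 ≤ γ) (hγ1 : γ < 1) (hd : ∀ t s, 0 ≤ d t s)
    (hsum : ∀ t, ∑ s, d t s = 1) (s : S) : Summable fun t => γ ^ t * d t s := by
  refine .of_nonneg_of_le (fun t => mul_nonneg (pow_nonneg hγ0 t) (hd t s)) (fun t => ?_)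
    (summable_geometric_of_lt_one hγ0 hγ1)
  exact mul_le_of_le_one_right (pow_nonneg hγ0 t)
    ((single_le_sum (fun s _ => hd t s) (mem_univ s)).trans_eq (hsum t))

theorem tsum_discounted_stateDist_eq (hsummable : ∀ s, Summable fun t => γ ^ t * d t s)
    (hd0 : d 0 = p0) (hdsucc : ∀ t s', d (t + 1) s' = ∑ s, ∑ a, d t s * π s a * P s a s')
    (s' : S) :
    ∑' t, γ ^ t * d t s' =
      p0 s' + γ * ∑ s, ∑ a, (∑' t, γ ^ t * d t s) * π s a * P s a s' := by
  rw [(hsummable s').tsum_eq_zero_add, pow_zero, one_mul, hd0]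
  congr 1
  have hterm : ∀ s a, Summable fun t => γ ^ t * d t s * π s a * P s a s' :=
    fun s a => ((hsummable s).mul_right _).mul_right _
  calc ∑' t, γ ^ (t + 1) * d (t + 1) s'
      = ∑' t, γ * ∑ s, ∑ a, γ ^ t * d t s * π s a * P s a s' := by
        refine tsum_congr fun t => ?_
        simp only [hdsucc, mul_sum]
        exact sum_congr rfl fun s _ => sum_congr rfl fun a _ => by ring
    _ = γ * ∑ s, ∑ a, ∑' t, γ ^ t * d t s * π s a * P s a s' := by
        rw [tsum_mul_left, Summable.tsum_finsetSum fun s _ => summable_sum fun a _ => hterm s a]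
        simp only [Summable.tsum_finsetSum fun a _ => hterm _ a]
    _ = γ * ∑ s, ∑ a, (∑' t, γ ^ t * d t s) * π s a * P s a s' := by
        simp only [tsum_mul_right]

theorem sum_visitation_mul_sub_discounted_next (c W : S → ℝ) (g : S → A → ℝ)
    (hflow : ∀ s', c s' = p0 s' + γ * ∑ s, ∑ a, c s * π s a * P s a s')
    (hW : ∀ s, ∑ a, π s a * g s a = W s) :
    ∑ s, ∑ a, c s * π s a * (g s a - γ * ∑ s', P s a s' * W s') = ∑ s, p0 s * W s := by
  have hinflow : ∑ s', (c s' - p0 s') * W s' =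
      ∑ s, ∑ a, c s * π s a * (γ * ∑ s', P s a s' * W s') := by
    calc ∑ s', (c s' - p0 s') * W s'
        = γ * ∑ s', (∑ s, ∑ a, c s * π s a * P s a s') * W s' := by
          rw [mul_sum]
          exact sum_congr rfl fun s' _ => by rw [hflow s']; ring
      _ = _ := by
          rw [sum_transition_mul, mul_sum]
          exact sum_congr rfl fun s _ => by rw [mul_sum]; exact sum_congr rfl fun a _ => by ring
  calc ∑ s, ∑ a, c s * π s a * (g s a - γ * ∑ s', P s a s' * W s')
      = ∑ s, c s * W s - ∑ s', (c s' - p0 s') * W s' := by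
        rw [hinflow, ← sum_sub_distrib]
        refine sum_congr rfl fun s _ => ?_
        rw [← hW, mul_sum, ← sum_sub_distrib]
        exact sum_congr rfl fun a _ => by ring
    _ = ∑ s, p0 s * W s := by simp only [sub_mul, sum_sub_distrib, sub_sub_cancel]

theorem sum_occ_mul_reward_add_entropy_eq (hγ0 : 0 ≤ γ) (hγ1 : γ < 1) (hp0 : ∀ s, 0 ≤ p0 s)
    (hp0sum : ∑ s, p0 s = 1) (hP : ∀ s a s', 0 ≤ P s a s') (hPsum : ∀ s a, ∑ s', P s a s' = 1)
    (hπ : ∀ s a, 0 ≤ π s a) (hπsum : ∀ s, ∑ a, π s a = 1) (hd0 : d 0 = p0)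
    (hdsucc : ∀ t s', d (t + 1) s' = ∑ s, ∑ a, d t s * π s a * P s a s')
    (Q : S × A → ℝ) (V : S → ℝ) (hV : ∀ s, V s = ∑ a, π s a * (Q (s, a) - Real.log (π s a)))
    (T : S × A → ℝ) (hT : ∀ sa, T sa = Q sa - γ * ∑ s', P sa.1 sa.2 s' * V s')
    (occ : S → A → ℝ) (hocc : ∀ s a, occ s a = π s a * ∑' t, γ ^ t * d t s) :
    ∑ s, ∑ a, occ s a * T (s, a) + ∑ s, ∑ a, occ s a * -Real.log (π s a) =
      ∑ s, p0 s * V s := by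
  have hsummable := summable_discounted_stateDist hγ0 hγ1
    (stateDist_nonneg hp0 hP hπ hd0 hdsucc) (sum_stateDist hp0sum hPsum hπsum hd0 hdsucc)
  rw [← sum_visitation_mul_sub_discounted_next _ V (fun s a => Q (s, a) - Real.log (π s a))
    (tsum_discounted_stateDist_eq hsummable hd0 hdsucc) fun s => (hV s).symm,
    ← sum_add_distrib]
  refine sum_congr rfl fun s _ => ?_
  rw [← sum_add_distrib]
  exact sum_congr rfl fun a _ => by rw [hocc, hT]; ring

end Occupancy

theorem softmax_policy_minimizes_J_general
    {S A : Type*} [Fintype S] [Fintype A] [Nonempty A]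
    (γ : ℝ) (hγ0 : 0 < γ) (hγ1 : γ < 1)
    (p0 : S → ℝ) (hp0pos : ∀ s, 0 < p0 s) (hp0sum : ∑ s, p0 s = 1)
    (P : S → A → S → ℝ) (hPnn : ∀ s a s', 0 ≤ P s a s')
    (hPsum : ∀ s a, ∑ s', P s a s' = 1)
    (ρE : S × A → ℝ) (hρEnn : ∀ sa, 0 ≤ ρE sa)
    (φ : ℝ → ℝ) (hφmono : Monotone φ)
    (Q : S × A → ℝ)
    -- soft value of a policy
    (V : (S → A → ℝ) → S → ℝ)
    (hV : ∀ π s, V π s = ∑ a, π s a * (Q (s, a) - Real.log (π s a)))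
    -- inverse soft Bellman operator applied to Q, as a function of the policy
    (T : (S → A → ℝ) → S × A → ℝ)
    (hT : ∀ π sa, T π sa = Q sa - γ * ∑ s', P sa.1 sa.2 s' * V π s')
    -- state distribution at each time step and unnormalized occupancy of a policy
    (d : (S → A → ℝ) → ℕ → S → ℝ) (hd0 : ∀ π, d π 0 = p0)
    (hdsucc : ∀ π t s', d π (t + 1) s' = ∑ s, ∑ a, d π t s * π s a * P s a s')
    (occ : (S → A → ℝ) → S → A → ℝ)
    (hocc : ∀ π s a, occ π s a = π s a * ∑' t : ℕ, γ ^ t * d π t s)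
    -- discounted causal entropy
    (H : (S → A → ℝ) → ℝ)
    (hH : ∀ π, H π = ∑ s, ∑ a, occ π s a * (-Real.log (π s a)))
    -- reward regularizer ψ_g with g = id - φ
    (ψ : (S × A → ℝ) → ℝ)
    (hψ : ∀ r, ψ r = ∑ sa, ρE sa * (r sa - φ (r sa)))
    -- the objective J(π, Q) as a function of π
    (J : (S → A → ℝ) → ℝ)
    (hJ : ∀ π, J π = (∑ sa, ρE sa * T π sa) -
        (∑ s, ∑ a, occ π s a * T π (s, a)) - H π - ψ (T π))
    -- the softmax policy induced by Q
    (πQ : S → A → ℝ)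
    (hπQ : ∀ s a, πQ s a = Real.exp (Q (s, a)) / ∑ a', Real.exp (Q (s, a'))) :
    ∀ π : S → A → ℝ, (∀ s a, 0 < π s a) → (∀ s, ∑ a, π s a = 1) →
      J πQ ≤ J π ∧ (J π = J πQ → π = πQ) := by
  intro π hπ hπsum
  have hπQ_softmax : ∀ s, πQ s = softmax fun a => Q (s, a) := fun s => funext (hπQ s)
  have hVπQ : ∀ s, V πQ s = Real.log (∑ a, Real.exp (Q (s, a))) := fun s => by
    rw [hV, hπQ_softmax, sum_softmax_mul_sub_log_softmax]
  have hV_le : ∀ s, V π s ≤ V πQ s := fun s => by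
    rw [hV, hVπQ]; exact sum_mul_sub_log_le_log_sum_exp _ (hπ s) (hπsum s)
  have hJ_eq : ∀ ρ : S → A → ℝ, (∀ s a, 0 ≤ ρ s a) → (∀ s, ∑ a, ρ s a = 1) →
      J ρ = ∑ sa, ρE sa * φ (T ρ sa) - ∑ s, p0 s * V ρ s := fun ρ hρ hρsum => by
    rw [hJ, hψ, hH, ← sum_occ_mul_reward_add_entropy_eq hγ0.le hγ1 (fun s => (hp0pos s).le)
      hp0sum hPnn hPsum hρ hρsum (hd0 ρ) (hdsucc ρ) Q _ (hV ρ) _ (hT ρ) _ (hocc ρ)]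
    simp only [mul_sub, sum_sub_distrib]
    ring
  have hφ_le : ∑ sa, ρE sa * φ (T πQ sa) ≤ ∑ sa, ρE sa * φ (T π sa) := by
    refine sum_le_sum fun sa _ => mul_le_mul_of_nonneg_left (hφmono ?_) (hρEnn sa)
    rw [hT, hT]
    gcongr with s' _
    exacts [hPnn _ _ _, hV_le s']
  have hp0V_le : ∀ s ∈ univ, p0 s * V π s ≤ p0 s * V πQ s :=
    fun s _ => mul_le_mul_of_nonneg_left (hV_le s) (hp0pos s).le
  rw [hJ_eq π (fun s a => (hπ s a).le) hπsum,
    hJ_eq πQ (fun s a => hπQ_softmax s ▸ (softmax_pos _ a).le)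
      (fun s => hπQ_softmax s ▸ sum_softmax _)]
  refine ⟨by linarith [sum_le_sum hp0V_le], fun hJ_eq_JπQ => funext fun s => ?_⟩
  have hV_eq := (sum_eq_sum_iff_of_le hp0V_le).mp (by linarith [sum_le_sum hp0V_le]) s (mem_univ s)
  rw [hπQ_softmax]
  refine eq_softmax_of_sum_mul_sub_log_eq _ (hπ s) (hπsum s) ?_
  rw [← hV, ← hVπQ, mul_left_cancel₀ (hp0pos s).ne' hV_eq]

/-- Proposition 3.4: for a fixed Q, the softmax policy
π_Q(a|s) = exp Q(s,a) / Σ_{a'} exp Q(s,a') is the unique minimizer of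
π ↦ J(π,Q) = E_{ρ_E}[T^π Q] - E_{ρ_π}[T^π Q] - H(π) - ψ(T^π Q)
over stochastic policies, where T^π is the inverse soft Bellman operator,
ρ_π the (unnormalized) occupancy of π, H the discounted causal entropy, and
ψ(r) = E_{ρ_E}[r - φ(r)] with φ concave and non-decreasing. -/
theorem softmax_policy_minimizes_J
    {S A : Type*} [Fintype S] [Fintype A] [Nonempty S] [Nonempty A]
    (γ : ℝ) (hγ0 : 0 < γ) (hγ1 : γ < 1)
    (p0 : S → ℝ) (hp0pos : ∀ s, 0 < p0 s) (hp0sum : ∑ s, p0 s = 1)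
    (P : S → A → S → ℝ) (hPnn : ∀ s a s', 0 ≤ P s a s')
    (hPsum : ∀ s a, ∑ s', P s a s' = 1)
    (ρE : S × A → ℝ) (hρEnn : ∀ sa, 0 ≤ ρE sa) (hρEsum : ∑ sa, ρE sa = 1)
    (φ : ℝ → ℝ) (hφconc : ConcaveOn ℝ Set.univ φ) (hφmono : Monotone φ)
    (Q : S × A → ℝ)
    -- soft value of a policy
    (V : (S → A → ℝ) → S → ℝ)
    (hV : ∀ π s, V π s = ∑ a, π s a * (Q (s, a) - Real.log (π s a)))
    -- inverse soft Bellman operator applied to Q, as a function of the policy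
    (T : (S → A → ℝ) → S × A → ℝ)
    (hT : ∀ π sa, T π sa = Q sa - γ * ∑ s', P sa.1 sa.2 s' * V π s')
    -- state distribution at each time step and unnormalized occupancy of a policy
    (d : (S → A → ℝ) → ℕ → S → ℝ) (hd0 : ∀ π, d π 0 = p0)
    (hdsucc : ∀ π t s', d π (t + 1) s' = ∑ s, ∑ a, d π t s * π s a * P s a s')
    (occ : (S → A → ℝ) → S → A → ℝ)
    (hocc : ∀ π s a, occ π s a = π s a * ∑' t : ℕ, γ ^ t * d π t s)
    -- discounted causal entropy
    (H : (S → A → ℝ) → ℝ)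
    (hH : ∀ π, H π = ∑ s, ∑ a, occ π s a * (-Real.log (π s a)))
    -- reward regularizer ψ_g with g = id - φ
    (ψ : (S × A → ℝ) → ℝ)
    (hψ : ∀ r, ψ r = ∑ sa, ρE sa * (r sa - φ (r sa)))
    -- the objective J(π, Q) as a function of π
    (J : (S → A → ℝ) → ℝ)
    (hJ : ∀ π, J π = (∑ sa, ρE sa * T π sa) -
        (∑ s, ∑ a, occ π s a * T π (s, a)) - H π - ψ (T π))
    -- the softmax policy induced by Q
    (πQ : S → A → ℝ)
    (hπQ : ∀ s a, πQ s a = Real.exp (Q (s, a)) / ∑ a', Real.exp (Q (s, a'))) :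
    ∀ π : S → A → ℝ, (∀ s a, 0 < π s a) → (∀ s, ∑ a, π s a = 1) →
      J πQ ≤ J π ∧ (J π = J πQ → π = πQ) :=
  softmax_policy_minimizes_J_general γ hγ0 hγ1 p0 hp0pos hp0sum P hPnn hPsum ρE hρEnn φ hφmono Q V
    hV T hT d hd0 hdsucc occ hocc H hH ψ hψ J hJ πQ hπQ
end

section
/- Let Q, Q' : S × A → ℝ and π a fixed policy in a finite MDP. If T^π Q = T^π Q', then Q = Q'. In other words, the inverse soft Bellman operator T^π is injective. -/
/-!
If `T Q = T Q'`, the entropy terms cancel and `D = Q - Q'` satisfies `D = γ • K D`, where `K`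
averages over the next state under `P` and the next action under `π`. An average never exceeds
the sup norm, so `‖D‖ ≤ |γ| ‖D‖`, which forces `D = 0` since `|γ| < 1`.
-/

open Finset

theorem abs_sum_mul_le_of_stochastic {ι : Type*} [Fintype ι] {w f : ι → ℝ} {M : ℝ}
    (hw : ∀ i, 0 ≤ w i) (hw1 : ∑ i, w i = 1) (hf : ∀ i, |f i| ≤ M) :
    |∑ i, w i * f i| ≤ M :=
  calc |∑ i, w i * f i| ≤ ∑ i, |w i * f i| := abs_sum_le_sum_abs _ _
    _ ≤ ∑ i, w i * M := sum_le_sum fun i _ => by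
        rw [abs_mul, abs_of_nonneg (hw i)]
        exact mul_le_mul_of_nonneg_left (hf i) (hw i)
    _ = M := by rw [← sum_mul, hw1, one_mul]

theorem eq_zero_of_eq_smul_of_norm_le {E : Type*} [NormedAddCommGroup E] [NormedSpace ℝ E]
    {f g : E} {γ : ℝ} (hγ : |γ| < 1) (hfg : f = γ • g) (hg : ‖g‖ ≤ ‖f‖) : f = 0 := by
  have hle : ‖f‖ ≤ |γ| * ‖f‖ :=
    calc ‖f‖ = |γ| * ‖g‖ := by rw [hfg, norm_smul, Real.norm_eq_abs]
      _ ≤ |γ| * ‖f‖ := mul_le_mul_of_nonneg_left hg (abs_nonneg γ)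
  exact norm_eq_zero.mp (by nlinarith [norm_nonneg f])

section SoftBellman

variable {S A : Type*} [Fintype S] [Fintype A]

/-- The expectation of `Q (s', a')` with `s' ∼ P(s, a)` and `a' ∼ π(s')`. -/
def expectedNext (P : S → A → S → ℝ) (π : S → A → ℝ) (Q : S × A → ℝ) (sa : S × A) : ℝ :=
  ∑ s', P sa.1 sa.2 s' * ∑ a, π s' a * Q (s', a)

theorem norm_expectedNext_le {P : S → A → S → ℝ} {π : S → A → ℝ}
    (hPnn : ∀ s a s', 0 ≤ P s a s') (hPsum : ∀ s a, ∑ s', P s a s' = 1)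
    (hπnn : ∀ s a, 0 ≤ π s a) (hπsum : ∀ s, ∑ a, π s a = 1) (Q : S × A → ℝ) :
    ‖expectedNext P π Q‖ ≤ ‖Q‖ := by
  refine (pi_norm_le_iff_of_nonneg (norm_nonneg Q)).mpr fun sa => ?_
  rw [Real.norm_eq_abs]
  refine abs_sum_mul_le_of_stochastic (hPnn _ _) (hPsum _ _) fun s' => ?_
  exact abs_sum_mul_le_of_stochastic (hπnn s') (hπsum s') fun a => by
    simpa only [Real.norm_eq_abs] using norm_le_pi_norm Q (s', a)

theorem softBellman_sub {γ : ℝ} {P : S → A → S → ℝ} {π : S → A → ℝ}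
    {T : (S × A → ℝ) → (S × A → ℝ)}
    (hT : ∀ Q sa, T Q sa = Q sa - γ * ∑ s', P sa.1 sa.2 s' *
      (∑ a, π s' a * (Q (s', a) - Real.log (π s' a)))) (Q Q' : S × A → ℝ) :
    T Q - T Q' = (Q - Q') - γ • expectedNext P π (Q - Q') := by
  funext sa
  simp only [Pi.sub_apply, Pi.smul_apply, smul_eq_mul, hT, expectedNext, mul_sub, sum_sub_distrib]
  ring

end SoftBellman

theorem inverse_soft_bellman_injective_general
    {S A : Type*} [Fintype S] [Fintype A]
    (γ : ℝ) (hγ0 : 0 < γ) (hγ1 : γ < 1)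
    (P : S → A → S → ℝ) (hPnn : ∀ s a s', 0 ≤ P s a s')
    (hPsum : ∀ s a, ∑ s', P s a s' = 1)
    (π : S → A → ℝ) (hπpos : ∀ s a, 0 < π s a) (hπsum : ∀ s, ∑ a, π s a = 1)
    (T : (S × A → ℝ) → (S × A → ℝ))
    (hT : ∀ Q sa, T Q sa = Q sa - γ * ∑ s', P sa.1 sa.2 s' *
      (∑ a, π s' a * (Q (s', a) - Real.log (π s' a)))) :
    Function.Injective T := by
  intro Q Q' h
  have hfix : Q - Q' = γ • expectedNext P π (Q - Q') := by
    have := softBellman_sub hT Q Q'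
    rwa [h, sub_self, eq_comm, sub_eq_zero] at this
  have hγ : |γ| < 1 := abs_lt.mpr ⟨by linarith, hγ1⟩
  exact sub_eq_zero.mp <| eq_zero_of_eq_smul_of_norm_le hγ hfix
    (norm_expectedNext_le hPnn hPsum (fun s a => (hπpos s a).le) hπsum _)

/-- The inverse soft Bellman operator T^π is injective: T^π Q = T^π Q' implies Q = Q'. -/
theorem inverse_soft_bellman_injective
    {S A : Type*} [Fintype S] [Fintype A] [Nonempty S] [Nonempty A]
    (γ : ℝ) (hγ0 : 0 < γ) (hγ1 : γ < 1)
    (P : S → A → S → ℝ) (hPnn : ∀ s a s', 0 ≤ P s a s')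
    (hPsum : ∀ s a, ∑ s', P s a s' = 1)
    (π : S → A → ℝ) (hπpos : ∀ s a, 0 < π s a) (hπsum : ∀ s, ∑ a, π s a = 1)
    (T : (S × A → ℝ) → (S × A → ℝ))
    (hT : ∀ Q sa, T Q sa = Q sa - γ * ∑ s', P sa.1 sa.2 s' *
      (∑ a, π s' a * (Q (s', a) - Real.log (π s' a)))) :
    Function.Injective T :=
  inverse_soft_bellman_injective_general γ hγ0 hγ1 P hPnn hPsum π hπpos hπsum T hT
end
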